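/- arXiv:2409.13858 — 2 statements merged into one kernel-verified Lean document; each statement's English description precedes it below -/
import Mathlib

section
/- Fix δ > 0 and γ ∈ ℝ with n ≥ 2, and write x_i' = c(x_i; δ, γ) and x̄' = (1/n)·Σ_{j=1}^n x_j'. Suppose the x_i' are not all equal, so sd(x') > 0. Then the function γ ↦ f(δ, γ) = −sd( (c(x_1; δ, γ), …, c(x_n; δ, γ)) ) is differentiable at γ with derivative ∂f/∂γ = −( 1 / ( (n−1)·sd(x') ) ) · Σ_{i=1}^n (x_i' − x̄') · ( log( x_i / (1 − x_i) )·x_i'·(1 − x_i') − (1/n)·Σ_{j=1}^n log( x_j / (1 − x_j) )·x_j'·(1 − x_j') ). -/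
open Finset

/-- The Linear Log Odds (LLO) recalibration function. -/
noncomputable def llo (x δ γ : ℝ) : ℝ := δ * x ^ γ / (δ * x ^ γ + (1 - x) ^ γ)

/-- Sample standard deviation of a vector. -/
noncomputable def sd {n : ℕ} (v : Fin n → ℝ) : ℝ :=
  Real.sqrt ((∑ i, (v i - (∑ j, v j) / (n : ℝ)) ^ 2) / ((n : ℝ) - 1))

lemma llo_hasDerivAt (x δ : ℝ) (hx0 : 0 < x) (hx1 : x < 1) (hδ : 0 < δ) (γ : ℝ) :
    HasDerivAt (fun g => llo x δ g)
      (Real.log (x / (1 - x)) * llo x δ γ * (1 - llo x δ γ)) γ := by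
  have h1x : 0 < 1 - x := by linarith
  have ha : HasDerivAt (fun g : ℝ => δ * x ^ g) (δ * (x ^ γ * Real.log x)) γ :=
    ((Real.hasStrictDerivAt_const_rpow hx0 γ).hasDerivAt).const_mul δ
  have hb : HasDerivAt (fun g : ℝ => (1 - x) ^ g) ((1 - x) ^ γ * Real.log (1 - x)) γ :=
    (Real.hasStrictDerivAt_const_rpow h1x γ).hasDerivAt
  have hpos : 0 < δ * x ^ γ + (1 - x) ^ γ :=
    add_pos (mul_pos hδ (Real.rpow_pos_of_pos hx0 γ)) (Real.rpow_pos_of_pos h1x γ)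
  have hd := ha.div (ha.add hb) (ne_of_gt hpos)
  refine hd.congr_deriv ?_
  unfold llo
  rw [Real.log_div (ne_of_gt hx0) (ne_of_gt h1x)]
  simp only [Pi.add_apply]
  field_simp [hpos.ne']
  ring

theorem neg_sd_hasDerivAt_gamma (n : ℕ) (hn : 2 ≤ n) (x : Fin n → ℝ)
    (hx : ∀ i, x i ∈ Set.Ioo (0 : ℝ) 1) (δ γ : ℝ) (hδ : 0 < δ)
    (hne : ∃ i j, llo (x i) δ γ ≠ llo (x j) δ γ) :
    HasDerivAt (fun g : ℝ => -sd (fun i => llo (x i) δ g))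
      (-(1 / (((n : ℝ) - 1) * sd (fun i => llo (x i) δ γ))) *
        ∑ i, (llo (x i) δ γ - (∑ j, llo (x j) δ γ) / (n : ℝ)) *
          (Real.log (x i / (1 - x i)) * llo (x i) δ γ * (1 - llo (x i) δ γ) -
            (∑ j, Real.log (x j / (1 - x j)) * llo (x j) δ γ * (1 - llo (x j) δ γ)) / (n : ℝ))) γ := by
  set v : Fin n → ℝ := fun i => llo (x i) δ γ with hv
  set L : Fin n → ℝ := fun i =>
    Real.log (x i / (1 - x i)) * llo (x i) δ γ * (1 - llo (x i) δ γ) with hL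
  have hn1 : (0 : ℝ) < (n : ℝ) - 1 := by
    have : (2 : ℝ) ≤ (n : ℝ) := by exact_mod_cast hn
    linarith
  -- derivative of each llo in γ
  have hderiv : ∀ i, HasDerivAt (fun g => llo (x i) δ g) (L i) γ := fun i =>
    llo_hasDerivAt (x i) δ (hx i).1 (hx i).2 hδ γ
  -- derivative of the mean
  have hmean : HasDerivAt (fun g => (∑ j, llo (x j) δ g) / (n : ℝ)) ((∑ j, L j) / (n : ℝ)) γ :=
    (HasDerivAt.fun_sum fun i _ => hderiv i).div_const _
  -- derivative of the sum of squares
  have hS : HasDerivAt (fun g => ∑ i, (llo (x i) δ g - (∑ j, llo (x j) δ g) / (n : ℝ)) ^ 2)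
      (∑ i, 2 * (v i - (∑ j, v j) / (n : ℝ)) ^ 1 * (L i - (∑ j, L j) / (n : ℝ))) γ :=
    HasDerivAt.fun_sum fun i _ => ((hderiv i).sub hmean).pow 2
  -- positivity of the sum of squares
  have hSpos : 0 < (∑ i, (v i - (∑ j, v j) / (n : ℝ)) ^ 2) := by
    rcases hne with ⟨i, j, hij⟩
    by_contra h
    push_neg at h
    have h0 : (∑ i, (v i - (∑ j, v j) / (n : ℝ)) ^ 2) = 0 :=
      le_antisymm h (Finset.sum_nonneg fun i _ => sq_nonneg _)
    have hall := (Finset.sum_eq_zero_iff_of_nonneg (fun i _ => sq_nonneg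
      (v i - (∑ j, v j) / (n : ℝ)))).mp h0
    have hi := hall i (Finset.mem_univ i)
    have hj := hall j (Finset.mem_univ j)
    have hvi : v i = (∑ j, v j) / (n : ℝ) := by nlinarith [sq_nonneg (v i - (∑ j, v j) / (n : ℝ))]
    have hvj : v j = (∑ j, v j) / (n : ℝ) := by nlinarith [sq_nonneg (v j - (∑ j, v j) / (n : ℝ))]
    exact hij (by rw [show llo (x i) δ γ = v i from rfl, show llo (x j) δ γ = v j from rfl,
      hvi, hvj])
  have hSd : HasDerivAt (fun g =>
      (∑ i, (llo (x i) δ g - (∑ j, llo (x j) δ g) / (n : ℝ)) ^ 2) / ((n : ℝ) - 1))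
      ((∑ i, 2 * (v i - (∑ j, v j) / (n : ℝ)) ^ 1 * (L i - (∑ j, L j) / (n : ℝ))) / ((n : ℝ) - 1))
      γ := hS.div_const _
  have hQpos : 0 < (∑ i, (v i - (∑ j, v j) / (n : ℝ)) ^ 2) / ((n : ℝ) - 1) :=
    div_pos hSpos hn1
  have hsqrt := hSd.sqrt (by simpa using ne_of_gt hQpos)
  have hfinal := hsqrt.neg
  have hsd : sd v = Real.sqrt ((∑ i, (v i - (∑ j, v j) / (n : ℝ)) ^ 2) / ((n : ℝ) - 1)) := rfl
  have hsdpos : 0 < sd v := by rw [hsd]; exact Real.sqrt_pos.mpr hQpos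
  refine hfinal.congr_deriv ?_
  rw [hsd]
  have hvL : ∀ i, llo (x i) δ γ = v i := fun _ => rfl
  have hLL : ∀ i, Real.log (x i / (1 - x i)) * llo (x i) δ γ * (1 - llo (x i) δ γ) = L i :=
    fun _ => rfl
  simp only [hLL]
  simp only [hvL]
  set s := Real.sqrt ((∑ i, (v i - (∑ j, v j) / (n : ℝ)) ^ 2) / ((n : ℝ) - 1)) with hsdef
  have hs : 0 < s := by rw [← hsd]; exact hsdpos
  rw [show (∑ i, 2 * (v i - (∑ j, v j) / (n : ℝ)) ^ 1 * (L i - (∑ j, L j) / (n : ℝ)))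
      = 2 * ∑ i, (v i - (∑ j, v j) / (n : ℝ)) * (L i - (∑ j, L j) / (n : ℝ)) by
    rw [Finset.mul_sum]; exact Finset.sum_congr rfl fun i _ => by ring]
  field_simp
  congr 1
  exact Finset.sum_congr rfl fun i _ => by ring
end

section
/- (MLE transformation under LLO adjustment.) Fix δ₀ > 0 and γ₀ ∈ ℝ with γ₀ ≠ 0, and let x_i' = c(x_i; δ₀, γ₀) for i = 1, …, n. If (δ̂, γ̂) with δ̂ > 0 maximizes L_x over (0, ∞) × ℝ, i.e. L_x(δ, γ) ≤ L_x(δ̂, γ̂) for all δ > 0 and γ ∈ ℝ, then the pair ( δ̂ / δ₀^{γ̂/γ₀}, γ̂/γ₀ ) maximizes L_{x'} over (0, ∞) × ℝ, i.e. L_{x'}(δ, γ) ≤ L_{x'}( δ̂ / δ₀^{γ̂/γ₀}, γ̂/γ₀ ) for all δ > 0 and γ ∈ ℝ. -/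
open Finset

/-- The LLO likelihood of predictions `x` with binary outcomes `y`. -/
noncomputable def lloLik (n : ℕ) (x y : Fin n → ℝ) (δ γ : ℝ) : ℝ :=
  ∏ i, (llo (x i) δ γ) ^ (y i) * (1 - llo (x i) δ γ) ^ (1 - y i)

lemma llo_comp (x δ₀ γ₀ δ γ : ℝ) (hx : x ∈ Set.Ioo (0 : ℝ) 1)
    (hδ₀ : 0 < δ₀) (hδ : 0 < δ) :
    llo (llo x δ₀ γ₀) δ γ = llo x (δ * δ₀ ^ γ) (γ * γ₀) := by
  obtain ⟨hx0, hx1⟩ := hx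
  have h1x : 0 < 1 - x := by linarith
  have ha : 0 < x ^ γ₀ := Real.rpow_pos_of_pos hx0 _
  have hb : 0 < (1 - x) ^ γ₀ := Real.rpow_pos_of_pos h1x _
  have hD : 0 < δ₀ * x ^ γ₀ + (1 - x) ^ γ₀ := by positivity
  set a := x ^ γ₀ with ha'
  set b := (1 - x) ^ γ₀ with hb'
  set D := δ₀ * a + b with hD'
  have hx' : llo x δ₀ γ₀ = δ₀ * a / D := rfl
  have h1x' : 1 - llo x δ₀ γ₀ = b / D := by
    rw [hx']; field_simp; rw [hD']; ring
  have hnum : (δ₀ * a / D) ^ γ = δ₀ ^ γ * a ^ γ / D ^ γ := by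
    rw [Real.div_rpow (by positivity) hD.le, Real.mul_rpow hδ₀.le ha.le]
  have hden : (b / D) ^ γ = b ^ γ / D ^ γ := Real.div_rpow hb.le hD.le γ
  have haγ : a ^ γ = x ^ (γ * γ₀) := by
    rw [ha', ← Real.rpow_mul hx0.le, mul_comm γ₀ γ]
  have hbγ : b ^ γ = (1 - x) ^ (γ * γ₀) := by
    rw [hb', ← Real.rpow_mul h1x.le, mul_comm γ₀ γ]
  have hDγ : (0 : ℝ) < D ^ γ := Real.rpow_pos_of_pos hD _
  have houter : llo (llo x δ₀ γ₀) δ γ =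
      δ * (llo x δ₀ γ₀) ^ γ / (δ * (llo x δ₀ γ₀) ^ γ + (1 - llo x δ₀ γ₀) ^ γ) := rfl
  rw [houter, h1x', hx', hnum, hden, haγ, hbγ]
  unfold llo
  have hd2 : (0 : ℝ) < δ * δ₀ ^ γ * x ^ (γ * γ₀) + (1 - x) ^ (γ * γ₀) := by
    have := Real.rpow_pos_of_pos hx0 (γ * γ₀)
    have := Real.rpow_pos_of_pos h1x (γ * γ₀)
    have := Real.rpow_pos_of_pos hδ₀ γ
    positivity
  field_simp

theorem mle_transform (n : ℕ) (x y : Fin n → ℝ)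
    (hx : ∀ i, x i ∈ Set.Ioo (0 : ℝ) 1) (hy : ∀ i, y i = 0 ∨ y i = 1)
    (δ₀ γ₀ : ℝ) (hδ₀ : 0 < δ₀) (hγ₀ : γ₀ ≠ 0)
    (δhat γhat : ℝ) (hδhat : 0 < δhat)
    (hmax : ∀ δ γ : ℝ, 0 < δ → lloLik n x y δ γ ≤ lloLik n x y δhat γhat) :
    ∀ δ γ : ℝ, 0 < δ →
      lloLik n (fun i => llo (x i) δ₀ γ₀) y δ γ ≤
        lloLik n (fun i => llo (x i) δ₀ γ₀) y (δhat / δ₀ ^ (γhat / γ₀)) (γhat / γ₀) := by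
  have key : ∀ δ γ : ℝ, 0 < δ →
      lloLik n (fun i => llo (x i) δ₀ γ₀) y δ γ = lloLik n x y (δ * δ₀ ^ γ) (γ * γ₀) := by
    intro δ γ hδ
    unfold lloLik
    refine Finset.prod_congr rfl fun i _ => ?_
    rw [llo_comp (x i) δ₀ γ₀ δ γ (hx i) hδ₀ hδ]
  intro δ γ hδ
  have hp : (0 : ℝ) < δ₀ ^ (γhat / γ₀) := Real.rpow_pos_of_pos hδ₀ _
  rw [key δ γ hδ, key _ _ (by positivity)]
  rw [div_mul_cancel₀ _ hp.ne', div_mul_cancel₀ _ hγ₀]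
  exact hmax _ _ (by positivity)
end
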